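/- Let T : ℝ → ℝ be defined by T(x) = x/(1-x) if x ≤ 1/2 and T(x) = (2x-1)/x if x > 1/2. If x ∈ (0,1) is a quadratic irrational (irrational and a root of a quadratic polynomial with integer coefficients), then the orbit of x under T is eventually periodic: there exist k ≥ 0 and m ≥ 1 such that T^[k+m](x) = T^[k](x). -/

import Mathlib

noncomputable def T : ℝ → ℝ := fun x => if x ≤ 1/2 then x / (1 - x) else (2*x - 1) / x

/-!
Each branch of `T` is a unimodular Möbius map, so if `x` is a root of an integer quadratic
`f₀`, then `T^[k] x` is a root of an integer quadratic `fₖ` of the same discriminant `D`, and the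
conjugate root of `fₖ` is moved by the same branches. Call `f` reduced when `f 0 * f 1 < 0`, i.e.
when its conjugate root lies outside `[0, 1]`. While `fₖ` is not reduced both of its roots lie in
`(0, 1)`, so the leading coefficient of `fₖ₊₁`, which is `fₖ 0` or `fₖ 1`, is smaller in absolute
value than that of `fₖ`; hence some `f_K` is reduced, and reducedness persists. Reduced forms of
discriminant `D` have coefficients bounded by `5 D`, so two of the `fₖ` with `k ≥ K` coincide, and
as a reduced form has only one root in `(0, 1)`, the orbit of `x` repeats.
-/

open Set

lemma T_of_le {y : ℝ} (h : y ≤ 1 / 2) : T y = y / (1 - y) := if_pos h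

lemma T_of_lt {y : ℝ} (h : 1 / 2 < y) : T y = (2 * y - 1) / y := if_neg h.not_ge

lemma Irrational.ne_one_half {y : ℝ} (h : Irrational y) : y ≠ 1 / 2 :=
  fun hy => h ⟨1 / 2, by rw [hy]; norm_num⟩

lemma T_mem_Ioo {y : ℝ} (hy : y ∈ Ioo 0 1) (hy' : y ≠ 1 / 2) : T y ∈ Ioo 0 1 := by
  obtain ⟨h0, h1⟩ := hy
  rcases hy'.lt_or_gt with hlt | hgt
  · rw [T_of_le hlt.le, mem_Ioo, div_lt_one (by linarith)]
    exact ⟨div_pos h0 (by linarith), by linarith⟩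
  · rw [T_of_lt hgt, mem_Ioo, div_lt_one h0]
    exact ⟨div_pos (by linarith) h0, by linarith⟩

lemma irrational_T {y : ℝ} (h : Irrational y) : Irrational (T y) := by
  have hy0 := h.ne_zero
  by_cases hy : y ≤ 1 / 2
  · have hy1 : 1 - y ≠ 0 := sub_ne_zero.mpr h.ne_one.symm
    have : T y = (y⁻¹ - (1 : ℕ))⁻¹ := by
      rw [T_of_le hy, Nat.cast_one]; field_simp
    exact this ▸ (h.inv.sub_natCast 1).inv
  · have : T y = (2 : ℕ) - y⁻¹ := by
      rw [T_of_lt (not_le.mp hy)]; field_simp; ring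
    exact this ▸ h.inv.natCast_sub 2

lemma irrational_iterate_T {y : ℝ} (h : Irrational y) (k : ℕ) : Irrational (T^[k] y) := by
  induction k with
  | zero => exact h
  | succ k ih => exact (Function.iterate_succ_apply' T k y).symm ▸ irrational_T ih

lemma iterate_T_mem_Ioo {x : ℝ} (hx : x ∈ Ioo 0 1) (hirr : Irrational x) (k : ℕ) :
    T^[k] x ∈ Ioo 0 1 := by
  induction k with
  | zero => exact hx
  | succ k ih =>
    rw [Function.iterate_succ_apply']
    exact T_mem_Ioo ih (irrational_iterate_T hirr k).ne_one_half

@[ext]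
structure IntQuad where
  a : ℤ
  b : ℤ
  c : ℤ

namespace IntQuad

def eval (f : IntQuad) (t : ℝ) : ℝ := f.a * t ^ 2 + f.b * t + f.c

def disc (f : IntQuad) : ℤ := discrim f.a f.b f.c

def IsReduced (f : IntQuad) : Prop := f.eval 0 * f.eval 1 < 0

/-- The coefficients of `(1 + t)² f (t / (1 + t))` if `y ≤ 1/2` and of `(2 - t)² f (1 / (2 - t))`
otherwise, so that the roots of `f.transform y` are the images of those of `f` under the branch
of `T` taken at `y`. -/
noncomputable def transform (y : ℝ) (f : IntQuad) : IntQuad :=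
  if y ≤ 1 / 2 then ⟨f.a + f.b + f.c, f.b + 2 * f.c, f.c⟩
  else ⟨f.c, -(f.b + 4 * f.c), f.a + 2 * f.b + 4 * f.c⟩

noncomputable def orbit (f : IntQuad) (x : ℝ) : ℕ → IntQuad
  | 0 => f
  | k + 1 => (f.orbit x k).transform (T^[k] x)

variable {f : IntQuad} {y : ℝ}

lemma eval_transform_T (h : f.eval y = 0) : (f.transform y).eval (T y) = 0 := by
  unfold transform
  split_ifs with hy
  · have : 1 - y ≠ 0 := by linarith
    rw [T_of_le hy]
    simp only [eval] at h ⊢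
    push_cast
    field_simp
    linear_combination h
  · have : y ≠ 0 := by linarith
    rw [T_of_lt (not_le.mp hy)]
    simp only [eval] at h ⊢
    push_cast
    field_simp
    linear_combination h

lemma disc_transform : (f.transform y).disc = f.disc := by
  unfold transform disc discrim
  split_ifs <;> ring

lemma a_transform_eq_eval_one_or_zero :
    ((f.transform y).a : ℝ) = f.eval 1 ∨ ((f.transform y).a : ℝ) = f.eval 0 := by
  unfold transform eval
  split_ifs
  · left; push_cast; ring
  · right; push_cast; ring

lemma a_ne_zero_of_eval_eq_zero (hD : f.disc ≠ 0) (hy : Irrational y) (h : f.eval y = 0) :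
    f.a ≠ 0 := by
  intro ha
  have hb : f.b ≠ 0 := fun hb => hD (by simp [disc, discrim, ha, hb])
  refine hy ⟨-f.c / f.b, ?_⟩
  simp only [eval, ha, Int.cast_zero] at h
  push_cast
  field_simp
  linear_combination -h

lemma disc_ne_zero_of_eval_eq_zero (ha : f.a ≠ 0) (hy : Irrational y) (h : f.eval y = 0) :
    f.disc ≠ 0 := by
  intro hD
  have hD' : discrim (f.a : ℝ) f.b f.c = 0 := by
    simp only [disc, discrim] at hD ⊢; exact_mod_cast hD
  have := (quadratic_eq_zero_iff_of_discrim_eq_zero (by exact_mod_cast ha) hD' y).mp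
    (by simpa [eval, sq] using h)
  exact hy ⟨-f.b / (2 * f.a), by rw [this]; push_cast; ring⟩

lemma exists_eval_eq_mul (ha : f.a ≠ 0) (h : f.eval y = 0) :
    ∃ w, ∀ t, f.eval t = f.a * (t - y) * (t - w) := by
  have ha' : (f.a : ℝ) ≠ 0 := by exact_mod_cast ha
  refine ⟨-f.b / f.a - y, fun t => ?_⟩
  simp only [eval] at h ⊢
  field_simp
  linear_combination h

lemma isReduced_iff {w : ℝ} (ha : f.a ≠ 0) (hw : ∀ t, f.eval t = f.a * (t - y) * (t - w))
    (hy : y ∈ Ioo 0 1) : f.IsReduced ↔ w < 0 ∨ 1 < w := by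
  have hpos : 0 < (f.a : ℝ) ^ 2 * (y * (1 - y)) :=
    mul_pos (by positivity) (mul_pos hy.1 (by linarith [hy.2]))
  have hprod : f.eval 0 * f.eval 1 = (f.a ^ 2 * (y * (1 - y))) * (w * (1 - w)) := by
    rw [hw, hw]; ring
  rw [IsReduced, hprod]
  constructor
  · intro h
    by_contra! hw01
    exact h.not_ge (mul_nonneg hpos.le (mul_nonneg hw01.1 (by linarith)))
  · rintro (hw0 | hw1)
    · exact mul_neg_of_pos_of_neg hpos (mul_neg_of_neg_of_pos hw0 (by linarith))
    · exact mul_neg_of_pos_of_neg hpos (mul_neg_of_pos_of_neg (by linarith) (by linarith))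

lemma natAbs_a_transform_lt (ha : f.a ≠ 0) (h : f.eval y = 0) (hy : y ∈ Ioo 0 1)
    (hr : ¬ f.IsReduced) : (f.transform y).a.natAbs < f.a.natAbs := by
  obtain ⟨w, hw⟩ := exists_eval_eq_mul ha h
  have hw01 : 0 ≤ w ∧ w ≤ 1 := by
    by_contra! hw'
    exact hr ((isReduced_iff ha hw hy).mpr ((lt_or_ge w 0).imp_right hw'))
  have hlt : ∀ t, |(t - y) * (t - w)| < 1 → |f.eval t| < |(f.a : ℝ)| := fun t ht => by
    rw [hw, mul_assoc, abs_mul]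
    exact mul_lt_of_lt_one_right (by positivity) ht
  have h0 : |f.eval 0| < |(f.a : ℝ)| :=
    hlt 0 (abs_lt.mpr ⟨by nlinarith [hy.1, hy.2], by nlinarith [hy.1, hy.2]⟩)
  have h1 : |f.eval 1| < |(f.a : ℝ)| :=
    hlt 1 (abs_lt.mpr ⟨by nlinarith [hy.1, hy.2], by nlinarith [hy.1, hy.2]⟩)
  suffices |((f.transform y).a : ℝ)| < |(f.a : ℝ)| by zify; exact_mod_cast this
  rcases a_transform_eq_eval_one_or_zero (f := f) (y := y) with h' | h' <;> rwa [h']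

lemma isReduced_transform (ha : f.a ≠ 0) (h : f.eval y = 0) (hy : y ∈ Ioo 0 1)
    (hy' : y ≠ 1 / 2) (hr : f.IsReduced) : (f.transform y).IsReduced := by
  obtain ⟨w, hw⟩ := exists_eval_eq_mul ha h
  have hw' := (isReduced_iff ha hw hy).mp hr
  obtain ⟨hy0, hy1⟩ := hy
  rcases hy'.lt_or_gt with hlt | hgt
  · have hprod : (f.transform y).eval 0 * (f.transform y).eval 1
        = 4 * f.eval 0 * f.eval (1 / 2) := by
      simp only [transform, if_pos hlt.le, eval]; push_cast; ring
    have hwneg : w * (1 / 2 - w) < 0 := by rcases hw' with hw' | hw' <;> nlinarith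
    rw [IsReduced, hprod, hw, hw]
    calc _ = 4 * f.a ^ 2 * (y * (1 / 2 - y)) * (w * (1 / 2 - w)) := by ring
      _ < 0 := mul_neg_of_pos_of_neg (by have := mul_pos hy0 (sub_pos.mpr hlt); positivity) hwneg
  · have hprod : (f.transform y).eval 0 * (f.transform y).eval 1
        = 4 * f.eval (1 / 2) * f.eval 1 := by
      simp only [transform, if_neg hgt.not_ge, eval]; push_cast; ring
    have hwpos : 0 < (1 / 2 - w) * (1 - w) := by rcases hw' with hw' | hw' <;> nlinarith
    rw [IsReduced, hprod, hw, hw]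
    calc _ = -(4 * f.a ^ 2 * ((y - 1 / 2) * (1 - y)) * ((1 / 2 - w) * (1 - w))) := by ring
      _ < 0 := neg_neg_of_pos
          (by have := mul_pos (sub_pos.mpr hgt) (sub_pos.mpr hy1); positivity)

lemma eq_of_isReduced {y' : ℝ} (ha : f.a ≠ 0) (hr : f.IsReduced) (h : f.eval y = 0)
    (h' : f.eval y' = 0) (hy : y ∈ Ioo 0 1) (hy' : y' ∈ Ioo 0 1) : y = y' := by
  by_contra hne
  obtain ⟨w, hw⟩ := exists_eval_eq_mul ha h
  have hwy' : y' = w := by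
    rw [hw, mul_eq_zero] at h'
    exact sub_eq_zero.mp <| h'.resolve_left <|
      mul_ne_zero (by exact_mod_cast ha) (sub_ne_zero.mpr (Ne.symm hne))
  rcases (isReduced_iff ha hw hy).mp hr with hw' | hw' <;> linarith [hy'.1, hy'.2]

lemma abs_le_of_isReduced (hr : f.IsReduced) :
    |f.a| ≤ 5 * f.disc ∧ |f.b| ≤ 5 * f.disc ∧ |f.c| ≤ 5 * f.disc := by
  have hce : f.c * (f.a + f.b + f.c) < 0 := by
    have : f.eval 0 * f.eval 1 = ((f.c * (f.a + f.b + f.c) : ℤ) : ℝ) := by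
      simp only [eval]; push_cast; ring
    rw [IsReduced, this] at hr
    exact_mod_cast hr
  have hD : f.disc = (f.b + 2 * f.c) ^ 2 - 4 * f.c * (f.a + f.b + f.c) := by
    unfold disc discrim; ring
  set e := f.a + f.b + f.c
  have hc1 : 1 ≤ |f.c| := Int.one_le_abs (by rintro h; simp [h] at hce)
  have he1 : 1 ≤ |e| := Int.one_le_abs (by rintro h; simp [h] at hce)
  have hce' : |f.c| * |e| = -(f.c * e) := by rw [← abs_mul, abs_of_neg hce]
  have hsq : |f.b + 2 * f.c| ≤ (f.b + 2 * f.c) ^ 2 := by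
    rw [← sq_abs]; nlinarith [abs_nonneg (f.b + 2 * f.c)]
  have hb : |f.b| ≤ |f.b + 2 * f.c| + 2 * |f.c| := by
    simpa [abs_mul] using abs_sub (f.b + 2 * f.c) (2 * f.c)
  have ha : |f.a| ≤ |e| + |f.b| + |f.c| := by
    rw [show f.a = e - f.b - f.c by simp only [e]; ring]
    linarith [abs_sub (e - f.b) f.c, abs_sub e f.b]
  refine ⟨by nlinarith, by nlinarith, by nlinarith⟩

lemma finite_setOf_isReduced (D : ℤ) : {f : IntQuad | f.disc = D ∧ f.IsReduced}.Finite := by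
  have hinj : Function.Injective fun f : IntQuad => (f.a, f.b, f.c) := by
    intro f g h
    simp only [Prod.mk.injEq] at h
    exact IntQuad.ext h.1 h.2.1 h.2.2
  refine (((finite_Icc (-(5 * D)) (5 * D)).prod ((finite_Icc (-(5 * D)) (5 * D)).prod
    (finite_Icc (-(5 * D)) (5 * D)))).preimage hinj.injOn).subset ?_
  rintro f ⟨rfl, hr⟩
  obtain ⟨ha, hb, hc⟩ := abs_le_of_isReduced hr
  exact ⟨abs_le.mp ha, abs_le.mp hb, abs_le.mp hc⟩

section Orbit

variable {x : ℝ}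

lemma eval_orbit (h : f.eval x = 0) : ∀ k, (f.orbit x k).eval (T^[k] x) = 0
  | 0 => h
  | k + 1 => by
    rw [orbit, Function.iterate_succ_apply']
    exact eval_transform_T (eval_orbit h k)

lemma disc_orbit : ∀ k, (f.orbit x k).disc = f.disc
  | 0 => rfl
  | k + 1 => by rw [orbit, disc_transform, disc_orbit k]

lemma a_orbit_ne_zero (hirr : Irrational x) (h : f.eval x = 0) (hD : f.disc ≠ 0) (k : ℕ) :
    (f.orbit x k).a ≠ 0 :=
  a_ne_zero_of_eval_eq_zero (by rwa [disc_orbit]) (irrational_iterate_T hirr k) (eval_orbit h k)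

lemma exists_isReduced_orbit (hx : x ∈ Ioo 0 1) (hirr : Irrational x) (h : f.eval x = 0)
    (hD : f.disc ≠ 0) : ∃ K, (f.orbit x K).IsReduced := by
  by_contra! hnot
  obtain ⟨k, hk⟩ := WellFounded.not_rel_apply_succ (r := (· < ·))
    fun k => (f.orbit x k).a.natAbs
  exact hk (natAbs_a_transform_lt (a_orbit_ne_zero hirr h hD k) (eval_orbit h k)
    (iterate_T_mem_Ioo hx hirr k) (hnot k))

lemma isReduced_orbit_add (hx : x ∈ Ioo 0 1) (hirr : Irrational x) (h : f.eval x = 0)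
    (hD : f.disc ≠ 0) {K : ℕ} (hK : (f.orbit x K).IsReduced) :
    ∀ k, (f.orbit x (K + k)).IsReduced
  | 0 => hK
  | k + 1 => isReduced_transform (a_orbit_ne_zero hirr h hD _) (eval_orbit h _)
      (iterate_T_mem_Ioo hx hirr _)
      (irrational_iterate_T hirr _).ne_one_half
      (isReduced_orbit_add hx hirr h hD hK k)

end Orbit

end IntQuad

open IntQuad

theorem stmt6 (x : ℝ) (hx : x ∈ Set.Ioo (0:ℝ) 1) (hirr : Irrational x)
    (hquad : ∃ a b c : ℤ, a ≠ 0 ∧ (a : ℝ) * x^2 + (b : ℝ) * x + (c : ℝ) = 0) :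
    ∃ k m : ℕ, 1 ≤ m ∧ T^[k + m] x = T^[k] x := by
  obtain ⟨a, b, c, ha, hroot⟩ := hquad
  set f : IntQuad := ⟨a, b, c⟩
  have hf : f.eval x = 0 := hroot
  have hD := disc_ne_zero_of_eval_eq_zero ha hirr hf
  obtain ⟨K, hK⟩ := exists_isReduced_orbit hx hirr hf hD
  have hred := isReduced_orbit_add hx hirr hf hD hK
  obtain ⟨i, j, hij, hfij⟩ := Set.Finite.exists_lt_map_eq_of_forall_mem
    (f := fun k => f.orbit x (K + k)) (t := {g | g.disc = f.disc ∧ g.IsReduced})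
    (fun k => ⟨disc_orbit _, hred k⟩) (finite_setOf_isReduced f.disc)
  refine ⟨K + i, j - i, by omega, ?_⟩
  rw [show K + i + (j - i) = K + j by omega]
  refine (eq_of_isReduced (a_orbit_ne_zero hirr hf hD _) (hred i) (eval_orbit hf (K + i)) ?_
    (iterate_T_mem_Ioo hx hirr _) (iterate_T_mem_Ioo hx hirr _)).symm
  exact hfij ▸ eval_orbit hf (K + j)
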